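/- Let V be a vertex ring with canonical Hasse-Schmidt derivation (D_i). Then the skew-symmetry formula holds: for all u, v ∈ V and n ∈ ℤ, v(n)u = (-1)^{n+1} ∑_{i≥0} (-1)^i D_i(u(n+i)v), where the sum is finite by the truncation axiom. -/

import Mathlib

noncomputable section

/-- Binomial coefficient `C(m, n)` for integer `m` and natural `n`:
`C(m,n) = m(m-1)⋯(m-n+1)/n!`. -/
def ibin (m : ℤ) (n : ℕ) : ℤ :=
  if 0 ≤ m then ((m.toNat.choose n : ℕ) : ℤ)
  else (-1) ^ n * ((((n : ℤ) - m - 1).toNat.choose n : ℕ) : ℤ)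

/-- Binomial coefficient `C(m, n)` for integers `m, n`, zero when `n < 0`. -/
def ibinZ (m n : ℤ) : ℤ := if 0 ≤ n then ibin m n.toNat else 0

/-- A vertex ring structure on an additive abelian group `V`: biadditive
products `mul n u v = u(n)v` for all `n : ℤ`, a vacuum element `one = 𝟙`,
satisfying truncation, the vacuum axioms, and the Jacobi identity. -/
structure VertexRing (V : Type*) [AddCommGroup V] where
  mul : ℤ → V → V → V
  one : V
  add_left : ∀ (n : ℤ) (u u' v : V), mul n (u + u') v = mul n u v + mul n u' v
  add_right : ∀ (n : ℤ) (u v v' : V), mul n u (v + v') = mul n u v + mul n u v'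
  trunc : ∀ u v : V, ∃ n₀ : ℤ, 0 ≤ n₀ ∧ ∀ n : ℤ, n₀ ≤ n → mul n u v = 0
  vac_create : ∀ u : V, mul (-1) u one = u
  vac_ann : ∀ (u : V) (n : ℤ), 0 ≤ n → mul n u one = 0
  jacobi : ∀ (r s t : ℤ) (u v w : V),
      (∑ᶠ i : ℕ, ibin r i • mul (r + s - (i : ℤ)) (mul (t + (i : ℤ)) u v) w) =
      (∑ᶠ i : ℕ, ((-1) ^ i * ibin t i) •
        (mul (r + t - (i : ℤ)) u (mul (s + (i : ℤ)) v w)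
          - (((-1 : ℤˣ) ^ t : ℤˣ) : ℤ) • mul (s + t - (i : ℤ)) v (mul (r + (i : ℤ)) u w)))

/-- The canonical Hasse–Schmidt derivation of a vertex ring: `D m u = u(-m-1)𝟙`. -/
def VertexRing.D {V : Type*} [AddCommGroup V] (R : VertexRing V) (m : ℕ) (u : V) : V :=
  R.mul (-(m : ℤ) - 1) u R.one

/-- The center of a vertex ring: states whose vertex operator is the constant
`u(-1)`, i.e. `u(n) = 0` for all `n ≠ -1`. -/
def VertexRing.center {V : Type*} [AddCommGroup V] (R : VertexRing V) : Set V :=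
  {u | ∀ n : ℤ, n ≠ -1 → ∀ v : V, R.mul n u v = 0}

/-!
Put `r = -1`, `s = 0`, `t = n` and `w = 𝟙` in the Jacobi identity. Since `ibin (-1) i = (-1)^i`,
the left side is `∑ (-1)^i D_i(u(n+i)v)`. On the right, `v(i)𝟙 = 0` for `i ≥ 0` and
`u(i-1)𝟙 = 0` for `i ≥ 1`, so only the `i = 0` term `-(-1)^n v(n)(u(-1)𝟙) = -(-1)^n v(n)u` survives.
-/

lemma ibin_zero (m : ℤ) : ibin m 0 = 1 := by
  simp [ibin]

lemma ibin_neg_one (i : ℕ) : ibin (-1) i = (-1) ^ i := by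
  simp [ibin]

lemma Int.units_neg_one_zpow_add_one_mul_self (n : ℤ) :
    ((-1 : ℤˣ) ^ (n + 1)) * (-1 : ℤˣ) ^ n = -1 := by
  rw [zpow_add_one, mul_right_comm, Int.units_mul_self, one_mul]

namespace VertexRing

variable {V : Type*} [AddCommGroup V] (R : VertexRing V)

lemma mul_zero_right (n : ℤ) (u : V) : R.mul n u 0 = 0 := by
  simpa using R.add_right n u 0 0

lemma finsum_neg_one_pow_smul_D_mul (t : ℤ) (u v : V) :
    ∑ᶠ i : ℕ, ((-1 : ℤ) ^ i) • R.D i (R.mul (t + i) u v)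
      = -((((-1 : ℤˣ) ^ t : ℤˣ) : ℤ) • R.mul t v u) := by
  calc ∑ᶠ i : ℕ, ((-1 : ℤ) ^ i) • R.D i (R.mul (t + i) u v)
      = ∑ᶠ i : ℕ, ibin (-1) i • R.mul (-1 + 0 - i) (R.mul (t + i) u v) R.one := by
        refine finsum_congr fun i => ?_
        rw [ibin_neg_one, show (-1 + 0 - (i : ℤ)) = -(i : ℤ) - 1 by ring]
        rfl
    _ = ∑ᶠ i : ℕ, ((-1) ^ i * ibin t i) •
          (R.mul (-1 + t - i) u (R.mul (0 + i) v R.one)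
            - (((-1 : ℤˣ) ^ t : ℤˣ) : ℤ) • R.mul (0 + t - i) v (R.mul (-1 + i) u R.one)) :=
        R.jacobi (-1) 0 t u v R.one
    _ = -((((-1 : ℤˣ) ^ t : ℤˣ) : ℤ) • R.mul t v u) := by
        rw [finsum_eq_single _ 0]
        · simp [ibin_zero, R.vac_ann v 0 le_rfl, R.vac_create, mul_zero_right]
        · intro i hi
          rw [R.vac_ann v _ (by positivity), R.vac_ann u _ (by omega), R.mul_zero_right,
            R.mul_zero_right]
          simp

end VertexRing

/-- Skew-symmetry: `v(n)u = (-1)^{n+1} ∑_{i≥0} (-1)^i D_i(u(n+i)v)`. -/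
theorem skew_symmetry {V : Type*} [AddCommGroup V] (R : VertexRing V) (u v : V) (n : ℤ) :
    R.mul n v u
      = (((-1 : ℤˣ) ^ (n + 1) : ℤˣ) : ℤ) •
          ∑ᶠ i : ℕ, ((-1 : ℤ) ^ i) • R.D i (R.mul (n + (i : ℤ)) u v) := by
  rw [R.finsum_neg_one_pow_smul_D_mul, smul_neg, smul_smul, ← Units.val_mul,
    Int.units_neg_one_zpow_add_one_mul_self]
  simp
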